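/- Let φ, K₀, α_∞, ν, Λ > 0 and set F := α_∞/φ, C₂ := F K₀/ν, and C₁ := 4 C₂ F K₀ / Λ². Let ξ_p, ψ, r be defined from C₁, C₂ as in the JKD setting, and let μ₀ := ∫₀^{C₁} ψ(u) du + r and μ₁ := ∫₀^{C₁} u ψ(u) du + r·ξ_p be the zeroth and first moments of the JKD representing measure dλ^D. Then μ₁/μ₀² − 1 = C₁/(2C₂) = 2K₀α_∞/(φΛ²), and hence Λ = √( 2K₀α_∞ / ( φ (μ₁/μ₀² − 1) ) ). -/

import Mathlib

/-- The pole location ξ_p of the JKD function R^D. -/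
noncomputable def xip (C₁ C₂ : ℝ) : ℝ := (C₁ + Real.sqrt (C₁ ^ 2 + 4 * C₂ ^ 2)) / 2

/-- The density ψ of the absolutely continuous part of the JKD representing measure. -/
noncomputable def psi (C₁ C₂ u : ℝ) : ℝ :=
  C₂ * Real.sqrt (u * (C₁ - u)) / (Real.pi * (C₂ ^ 2 + u * (C₁ - u)))

/-- The strength r of the Dirac mass at ξ_p. -/
noncomputable def rres (C₁ C₂ : ℝ) : ℝ :=
  2 * C₂ * Real.sqrt (xip C₁ C₂ * (xip C₁ C₂ - C₁)) / (2 * xip C₁ C₂ - C₁)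

/-!
With `B = √(C₁² + 4C₂²)`, the density `ψ` has the explicit primitive `psiPrimitive`, a combination
of two arcsines, whence `∫₀^{C₁} ψ = C₂ - 2C₂²/B`; the atom `r = 2C₂²/B` makes up exactly the
difference, so `μ₀ = C₂`. Since `ψ(C₁ - u) = ψ(u)`, the first moment of `ψ` is `C₁/2` times its
mass, and with `ξ_p = (C₁ + B)/2` this gives `μ₁ = C₂² + C₁C₂/2`. Hence `μ₁/μ₀² - 1 = C₁/(2C₂)`,
which in the physical parameters is `2K₀α_∞/(φΛ²)`, and solving for `Λ` gives the last claim.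
-/

open Real Set intervalIntegral MeasureTheory

theorem hasDerivAt_arcsin_two_mul_sub_div {c u : ℝ} (hu : u ∈ Ioo 0 c) :
    HasDerivAt (fun x => arcsin ((2 * x - c) / c)) (1 / √(u * (c - u))) u := by
  obtain ⟨hu0, huc⟩ := hu
  have hc : 0 < c := hu0.trans huc
  have hinner : HasDerivAt (fun x => (2 * x - c) / c) (2 / c) u := by
    simpa using (((hasDerivAt_id u).const_mul 2).sub_const c).div_const c
  have hlt : -1 < (2 * u - c) / c ∧ (2 * u - c) / c < 1 := by
    constructor
    · rw [lt_div_iff₀ hc]; linarith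
    · rw [div_lt_one hc]; linarith
  refine ((hasDerivAt_arcsin hlt.1.ne' hlt.2.ne).comp u hinner).congr_deriv ?_
  have hsq : 1 - ((2 * u - c) / c) ^ 2 = (2 / c) ^ 2 * (u * (c - u)) := by
    field_simp; ring
  rw [hsq, sqrt_mul (sq_nonneg _), sqrt_sq (by positivity)]
  have : 0 < √(u * (c - u)) := sqrt_pos.2 (mul_pos hu0 (by linarith))
  field_simp

theorem hasDerivAt_arcsin_psi_term {c d u : ℝ} (hu : u ∈ Ioo 0 c) :
    HasDerivAt (fun x => arcsin (d * (2 * x - c) / (c * √(d ^ 2 + x * (c - x)))))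
      (d * √(c ^ 2 + 4 * d ^ 2) / (2 * (d ^ 2 + u * (c - u)) * √(u * (c - u)))) u := by
  obtain ⟨hu0, huc⟩ := hu
  have hc : 0 < c := hu0.trans huc
  have hs : 0 < u * (c - u) := mul_pos hu0 (by linarith)
  have hq : 0 < d ^ 2 + u * (c - u) := by positivity
  set S := √(u * (c - u))
  set Q := √(d ^ 2 + u * (c - u)) with hQ
  set B := √(c ^ 2 + 4 * d ^ 2)
  have hSpos : 0 < S := sqrt_pos.2 hs
  have hQpos : 0 < Q := sqrt_pos.2 hq
  have hS2 : S ^ 2 = u * (c - u) := sq_sqrt hs.le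
  have hQ2 : Q ^ 2 = d ^ 2 + u * (c - u) := sq_sqrt hq.le
  have hB2 : B ^ 2 = c ^ 2 + 4 * d ^ 2 := sq_sqrt (by positivity)
  have hQder : HasDerivAt (fun x => √(d ^ 2 + x * (c - x))) ((c - 2 * u) / (2 * Q)) u := by
    have hpoly : HasDerivAt (fun x => d ^ 2 + x * (c - x)) (c - 2 * u) u :=
      (((hasDerivAt_id' u).mul ((hasDerivAt_id' u).const_sub c)).const_add _).congr_deriv
        (by ring)
    exact (hpoly.sqrt hq.ne').congr_deriv (by ring)
  have hinner : HasDerivAt (fun x => d * (2 * x - c) / (c * √(d ^ 2 + x * (c - x))))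
      (d * c * B ^ 2 / (2 * Q) / (c * Q) ^ 2) u := by
    have hnum : HasDerivAt (fun x => d * (2 * x - c)) (d * 2) u := by
      simpa using (((hasDerivAt_id u).const_mul 2).sub_const c).const_mul d
    refine (hnum.div (hQder.const_mul c) (by positivity)).congr_deriv ?_
    rw [← hQ, hB2]
    field_simp
    linear_combination 4 * d * hQ2
  have hsq : 1 - (d * (2 * u - c) / (c * Q)) ^ 2 = (B * S / (c * Q)) ^ 2 := by
    field_simp
    linear_combination c ^ 2 * hQ2 - S ^ 2 * hB2 - (c ^ 2 + 4 * d ^ 2) * hS2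
  have hlt : (d * (2 * u - c) / (c * Q)) ^ 2 < 1 := by
    have : 0 < (B * S / (c * Q)) ^ 2 := by
      have : 0 < B := sqrt_pos.2 (by positivity)
      positivity
    linarith
  have hne : d * (2 * u - c) / (c * Q) ≠ 1 := by intro h; rw [h] at hlt; norm_num at hlt
  have hne' : d * (2 * u - c) / (c * Q) ≠ -1 := by intro h; rw [h] at hlt; norm_num at hlt
  refine ((hasDerivAt_arcsin hne' hne).comp u hinner).congr_deriv ?_
  rw [hsq, sqrt_sq (by positivity), ← hQ2]
  field_simp

noncomputable def psiPrimitive (C₁ C₂ u : ℝ) : ℝ :=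
  C₂ / π * arcsin ((2 * u - C₁) / C₁) -
    2 * C₂ ^ 2 / (π * √(C₁ ^ 2 + 4 * C₂ ^ 2)) *
      arcsin (C₂ * (2 * u - C₁) / (C₁ * √(C₂ ^ 2 + u * (C₁ - u))))

theorem hasDerivAt_psiPrimitive {C₁ C₂ u : ℝ} (hu : u ∈ Ioo 0 C₁) :
    HasDerivAt (psiPrimitive C₁ C₂) (psi C₁ C₂ u) u := by
  refine (((hasDerivAt_arcsin_two_mul_sub_div hu).const_mul (C₂ / π)).sub
    ((hasDerivAt_arcsin_psi_term hu).const_mul _)).congr_deriv ?_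
  obtain ⟨hu0, huc⟩ := hu
  have hs : 0 < u * (C₁ - u) := mul_pos hu0 (by linarith)
  have hB : 0 < √(C₁ ^ 2 + 4 * C₂ ^ 2) := sqrt_pos.2 (by nlinarith)
  have hq : 0 < C₂ ^ 2 + u * (C₁ - u) := by positivity
  have hS2 : √(u * (C₁ - u)) ^ 2 = u * (C₁ - u) := sq_sqrt hs.le
  have hS : 0 < √(u * (C₁ - u)) := sqrt_pos.2 hs
  unfold psi
  generalize √(C₁ ^ 2 + 4 * C₂ ^ 2) = B at hB ⊢
  generalize √(u * (C₁ - u)) = S at hS hS2 ⊢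
  field_simp
  linear_combination -C₂ * hS2

theorem continuousOn_psi {C₁ C₂ : ℝ} (h₂ : 0 < C₂) : ContinuousOn (psi C₁ C₂) (Icc 0 C₁) := by
  refine ContinuousOn.div (by fun_prop) (by fun_prop) fun x hx => ?_
  have : 0 ≤ x * (C₁ - x) := mul_nonneg hx.1 (by linarith [hx.2])
  positivity

theorem continuousOn_psiPrimitive {C₁ C₂ : ℝ} (h₁ : 0 < C₁) (h₂ : 0 < C₂) :
    ContinuousOn (psiPrimitive C₁ C₂) (Icc 0 C₁) := by
  refine ContinuousOn.sub (by fun_prop) (continuousOn_const.mul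
    (continuous_arcsin.comp_continuousOn (ContinuousOn.div (by fun_prop) (by fun_prop)
      fun x hx => ?_)))
  have : 0 ≤ x * (C₁ - x) := mul_nonneg hx.1 (by linarith [hx.2])
  have : 0 < √(C₂ ^ 2 + x * (C₁ - x)) := sqrt_pos.2 (by positivity)
  positivity

theorem psiPrimitive_right_sub_left {C₁ C₂ : ℝ} (h₁ : 0 < C₁) (h₂ : 0 < C₂) :
    psiPrimitive C₁ C₂ C₁ - psiPrimitive C₁ C₂ 0 = C₂ - 2 * C₂ ^ 2 / √(C₁ ^ 2 + 4 * C₂ ^ 2) := by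
  have hright : C₂ * (2 * C₁ - C₁) / (C₁ * √(C₂ ^ 2 + C₁ * (C₁ - C₁))) = 1 := by
    rw [sub_self, mul_zero, add_zero, sqrt_sq h₂.le]; field_simp; ring
  have hleft : C₂ * (2 * 0 - C₁) / (C₁ * √(C₂ ^ 2 + 0 * (C₁ - 0))) = -1 := by
    rw [zero_mul, add_zero, sqrt_sq h₂.le]; field_simp; ring
  unfold psiPrimitive
  rw [hright, hleft, show (2 * C₁ - C₁) / C₁ = 1 by field_simp; ring,
    show (2 * 0 - C₁) / C₁ = -1 by field_simp; ring, arcsin_neg, arcsin_one]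
  have : 0 < √(C₁ ^ 2 + 4 * C₂ ^ 2) := sqrt_pos.2 (by positivity)
  field_simp
  ring

theorem integral_psi {C₁ C₂ : ℝ} (h₁ : 0 < C₁) (h₂ : 0 < C₂) :
    ∫ u in (0 : ℝ)..C₁, psi C₁ C₂ u = C₂ - 2 * C₂ ^ 2 / √(C₁ ^ 2 + 4 * C₂ ^ 2) := by
  rw [integral_eq_sub_of_hasDerivAt_of_le h₁.le (continuousOn_psiPrimitive h₁ h₂)
    (fun _ hu => hasDerivAt_psiPrimitive hu)
    ((continuousOn_psi h₂).intervalIntegrable_of_Icc h₁.le),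
    psiPrimitive_right_sub_left h₁ h₂]

theorem integral_mul_eq_of_symm {f : ℝ → ℝ} {a b : ℝ} (hf : IntervalIntegrable f volume a b)
    (hsymm : ∀ x, f (a + b - x) = f x) :
    ∫ x in a..b, x * f x = (a + b) / 2 * ∫ x in a..b, f x := by
  have hreflect : ∫ x in a..b, (a + b - x) * f x = ∫ x in a..b, x * f x := by
    simpa [hsymm] using integral_comp_sub_left (fun x => x * f x) (a + b) (a := a) (b := b)
  have hxf : IntervalIntegrable (fun x => x * f x) volume a b :=
    hf.continuousOn_mul continuousOn_id
  have hsplit : ∫ x in a..b, (a + b - x) * f x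
      = (a + b) * (∫ x in a..b, f x) - ∫ x in a..b, x * f x := by
    simp only [sub_mul]
    rw [integral_sub (hf.const_mul _) hxf, intervalIntegral.integral_const_mul]
  linarith

theorem xip_mul_xip_sub (C₁ C₂ : ℝ) : xip C₁ C₂ * (xip C₁ C₂ - C₁) = C₂ ^ 2 := by
  unfold xip
  linear_combination (1 / 4 : ℝ) * sq_sqrt (by positivity : 0 ≤ C₁ ^ 2 + 4 * C₂ ^ 2)

theorem rres_eq {C₁ C₂ : ℝ} (h₂ : 0 ≤ C₂) : rres C₁ C₂ = 2 * C₂ ^ 2 / √(C₁ ^ 2 + 4 * C₂ ^ 2) := by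
  rw [rres, xip_mul_xip_sub, sqrt_sq h₂, xip]
  ring_nf

theorem integral_psi_add_rres {C₁ C₂ : ℝ} (h₁ : 0 < C₁) (h₂ : 0 < C₂) :
    (∫ u in (0 : ℝ)..C₁, psi C₁ C₂ u) + rres C₁ C₂ = C₂ := by
  rw [integral_psi h₁ h₂, rres_eq h₂.le]
  ring

theorem integral_mul_psi_add_rres_mul_xip {C₁ C₂ : ℝ} (h₁ : 0 < C₁) (h₂ : 0 < C₂) :
    (∫ u in (0 : ℝ)..C₁, u * psi C₁ C₂ u) + rres C₁ C₂ * xip C₁ C₂ = C₂ ^ 2 + C₁ * C₂ / 2 := by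
  have hsymm : ∀ u, psi C₁ C₂ (0 + C₁ - u) = psi C₁ C₂ u := fun u => by unfold psi; ring_nf
  have hB : 0 < √(C₁ ^ 2 + 4 * C₂ ^ 2) := sqrt_pos.2 (by positivity)
  rw [integral_mul_eq_of_symm ((continuousOn_psi h₂).intervalIntegrable_of_Icc h₁.le) hsymm,
    integral_psi h₁ h₂, rres_eq h₂.le, xip]
  field_simp
  ring

/-- Exact recovery of the JKD parameter Λ from the zeroth and first moments of
the representing measure of the JKD permeability. -/
theorem stmt18 (φ K₀ αinf ν Λ : ℝ)
    (hφ : 0 < φ) (hK₀ : 0 < K₀) (hα : 0 < αinf) (hν : 0 < ν) (hΛ : 0 < Λ)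
    (F C₂ C₁ : ℝ)
    (hF : F = αinf / φ) (hC₂ : C₂ = F * K₀ / ν) (hC₁ : C₁ = 4 * C₂ * F * K₀ / Λ ^ 2)
    (μ₀ μ₁ : ℝ)
    (hμ₀ : μ₀ = (∫ u in (0:ℝ)..C₁, psi C₁ C₂ u) + rres C₁ C₂)
    (hμ₁ : μ₁ = (∫ u in (0:ℝ)..C₁, u * psi C₁ C₂ u) + rres C₁ C₂ * xip C₁ C₂) :
    μ₁ / μ₀ ^ 2 - 1 = C₁ / (2 * C₂) ∧
    C₁ / (2 * C₂) = 2 * K₀ * αinf / (φ * Λ ^ 2) ∧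
    Λ = Real.sqrt (2 * K₀ * αinf / (φ * (μ₁ / μ₀ ^ 2 - 1))) := by
  have h₂ : 0 < C₂ := by rw [hC₂, hF]; positivity
  have h₁ : 0 < C₁ := by rw [hC₁, hF]; positivity
  have hratio : μ₁ / μ₀ ^ 2 - 1 = C₁ / (2 * C₂) := by
    rw [hμ₀, hμ₁, integral_psi_add_rres h₁ h₂, integral_mul_psi_add_rres_mul_xip h₁ h₂]
    field_simp
    ring
  have hphys : C₁ / (2 * C₂) = 2 * K₀ * αinf / (φ * Λ ^ 2) := by
    rw [hC₁, hC₂, hF]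
    field_simp
    ring
  refine ⟨hratio, hphys, ?_⟩
  rw [hratio, hphys, show 2 * K₀ * αinf / (φ * (2 * K₀ * αinf / (φ * Λ ^ 2))) = Λ ^ 2 by
    field_simp, sqrt_sq hΛ.le]
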